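/- arXiv:math/0604291 — 2 statements merged into one kernel-verified Lean document; each statement's English description precedes it below -/
import Mathlib

section
/- Let γ ≥ 0, μ ≥ 0 and k − γ − 2p > 0. Set Q = (k−γ−2p)(pk−k+γ)/p², α = (p−1)(pk−2k+2p+2γ)/((k−γ−2p)(pk−k+γ)), R = 2(p−1)(k−γ−2p)Q^{p−1}/p, and for β ∈ ℝ define r₃(β) = −αQ^{p−1}/2 + p(p−2)α³Q^p/(6(p−1)²) − Rβ, r₃'(β) = −αQ^{p−1}/2 + pμαQ^p/(p−1) + (−R + pαQ^p/(p−1))β, and r₃'' = −αQ^{p−1}. If γ ≠ (3pk−8p²−2k+6p)/(4p−2) or p > (13+√105)/4, then there exists β ∈ ℝ such that r₃(β) + r₃'(β) + r₃'' > 0. -/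
open Real

set_option maxHeartbeats 1000000 in
/-- The algebraic core of Lemma 1 of the paper: positivity of the cubic-order
coefficient `r₃ + r₃' + r₃''` for a suitable choice of `β`. -/
theorem cubic_coefficient_positive
    (p k γ μ : ℝ) (hp : 1 < p) (hk : 1 ≤ k) (hγ : 0 ≤ γ) (hμ : 0 ≤ μ)
    (hpos : 0 < k - γ - 2*p)
    (Q α R : ℝ)
    (hQ : Q = (k - γ - 2*p)*(p*k - k + γ)/p^2)
    (hα : α = (p-1)*(p*k - 2*k + 2*p + 2*γ)/((k - γ - 2*p)*(p*k - k + γ)))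
    (hR : R = 2*(p-1)*(k - γ - 2*p)*Q^(p-1)/p)
    (hcond : γ ≠ (3*p*k - 8*p^2 - 2*k + 6*p)/(4*p - 2) ∨ (13 + Real.sqrt 105)/4 < p) :
    ∃ β : ℝ,
      0 < (-(α*Q^(p-1))/2 + p*(p-2)*α^3*Q^p/(6*(p-1)^2) - R*β) +
          (-(α*Q^(p-1))/2 + p*μ*α*Q^p/(p-1) + (-R + p*α*Q^p/(p-1))*β) +
          (-(α*Q^(p-1))) := by
  have hp0 : (0:ℝ) < p := by linarith
  have hp1 : (0:ℝ) < p - 1 := by linarith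
  have hpne : p ≠ 0 := ne_of_gt hp0
  have hp1ne : p - 1 ≠ 0 := ne_of_gt hp1
  have hs : 0 < p*k - k + γ := by nlinarith
  have hsne : p*k - k + γ ≠ 0 := ne_of_gt hs
  have htne : k - γ - 2*p ≠ 0 := ne_of_gt hpos
  have hQpos : 0 < Q := by
    rw [hQ]; exact div_pos (mul_pos hpos hs) (by positivity)
  have hQ1 : 0 < Q^(p-1) := Real.rpow_pos_of_pos hQpos _
  have hQp : Q^p = Q^(p-1) * Q := by
    nth_rewrite 1 [show p = (p-1)+1 by ring]
    rw [Real.rpow_add hQpos, Real.rpow_one]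
  -- the coefficient of β
  have hcD : -2*R + p*α*Q^p/(p-1)
      = Q^(p-1) * ((4*p-2)*γ - (3*p*k - 8*p^2 - 2*k + 6*p)) / p := by
    rw [hR, hQp, hQ, hα]
    field_simp
    ring
  -- linear form of the goal expression
  have hlin : ∀ β : ℝ,
      (-(α*Q^(p-1))/2 + p*(p-2)*α^3*Q^p/(6*(p-1)^2) - R*β) +
      (-(α*Q^(p-1))/2 + p*μ*α*Q^p/(p-1) + (-R + p*α*Q^p/(p-1))*β) +
      (-(α*Q^(p-1)))
      = (-2*(α*Q^(p-1)) + p*(p-2)*α^3*Q^p/(6*(p-1)^2) + p*μ*α*Q^p/(p-1))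
        + (Q^(p-1) * ((4*p-2)*γ - (3*p*k - 8*p^2 - 2*k + 6*p)) / p) * β := by
    intro β
    rw [← hcD]; ring
  set S₀ : ℝ := -2*(α*Q^(p-1)) + p*(p-2)*α^3*Q^p/(6*(p-1)^2) + p*μ*α*Q^p/(p-1)
    with hS₀
  by_cases hD : (4*p-2)*γ - (3*p*k - 8*p^2 - 2*k + 6*p) = 0
  · -- degenerate case: coefficient of β vanishes; first disjunct fails
    have hp2 : (13 + Real.sqrt 105)/4 < p := by
      rcases hcond with h | h
      · exfalso
        apply h
        rw [eq_div_iff (by linarith : 4*p - 2 ≠ 0)]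
        linarith
      · exact h
    have hsqrt : Real.sqrt 105 ^ 2 = 105 := Real.sq_sqrt (by norm_num)
    have hsnn : 0 ≤ Real.sqrt 105 := Real.sqrt_nonneg 105
    have hquad : 0 < 2*p^2 - 13*p + 8 := by nlinarith [sq_nonneg (4*p - 13 - Real.sqrt 105)]
    have hp5 : 5 < p := by
      by_contra hle
      push_neg at hle
      nlinarith [mul_nonneg (by linarith : (0:ℝ) ≤ p - 1) (by linarith : (0:ℝ) ≤ 5 - p)]
    -- structural relations coming from D = 0
    have hst : p*k - k + γ = (4*p-3)*(k - γ - 2*p) := by linear_combination hD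
    have hm : p*k - 2*k + 2*p + 2*γ = 4*(p-1)*(k - γ - 2*p) := by linear_combination hD
    have h43 : (0:ℝ) < 4*p - 3 := by linarith
    have hα' : α = 4*(p-1)^2/((4*p-3)*(k - γ - 2*p)) := by
      rw [hα, hm, hst]
      field_simp
    have hQ' : Q = (4*p-3)*(k - γ - 2*p)^2/p^2 := by
      rw [hQ, hst]; ring
    refine ⟨0, ?_⟩
    rw [hlin 0, hD]
    have hBpos : 0 < -2*α + p*(p-2)*α^3*Q/(6*(p-1)^2) + p*μ*α*Q/(p-1) := by
      rw [hα', hQ']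
      have ht := hpos
      have hnum : 0 < 4*(p-2)*(p-1)^2 - 3*p*(4*p-3) := by
        nlinarith [mul_pos (by linarith : (0:ℝ) < 2*p - 1) hquad]
      have e : -2*(4*(p-1)^2/((4*p-3)*(k - γ - 2*p)))
          + p*(p-2)*(4*(p-1)^2/((4*p-3)*(k - γ - 2*p)))^3*((4*p-3)*(k - γ - 2*p)^2/p^2)/(6*(p-1)^2)
          + p*μ*(4*(p-1)^2/((4*p-3)*(k - γ - 2*p)))*((4*p-3)*(k - γ - 2*p)^2/p^2)/(p-1)
          = (8*(p-1)^2*(4*(p-2)*(p-1)^2 - 3*p*(4*p-3)))/(3*p*(4*p-3)^2*(k - γ - 2*p))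
            + 4*μ*(p-1)*(k - γ - 2*p)/p := by
        field_simp
        ring
      rw [e]
      have h1 : 0 < (8*(p-1)^2*(4*(p-2)*(p-1)^2 - 3*p*(4*p-3)))/(3*p*(4*p-3)^2*(k - γ - 2*p)) := by
        apply div_pos
        · positivity
        · positivity
      have h2 : 0 ≤ 4*μ*(p-1)*(k - γ - 2*p)/p := by positivity
      linarith
    have hS : S₀ = Q^(p-1) * (-2*α + p*(p-2)*α^3*Q/(6*(p-1)^2) + p*μ*α*Q/(p-1)) := by
      rw [hS₀, hQp]; ring
    rw [hS]
    have := mul_pos hQ1 hBpos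
    linarith [this]
  · -- nondegenerate case: choose β so the total equals 1
    set c : ℝ := Q^(p-1) * ((4*p-2)*γ - (3*p*k - 8*p^2 - 2*k + 6*p)) / p with hc
    have hcne : c ≠ 0 := by
      rw [hc]
      exact div_ne_zero (mul_ne_zero (ne_of_gt hQ1) hD) hpne
    refine ⟨(1 - S₀)/c, ?_⟩
    rw [hlin ((1 - S₀)/c)]
    have h2 : c * ((1 - S₀)/c) = 1 - S₀ := by
      field_simp
    rw [h2]
    linarith
end

section
/- For every integer i ≥ 1, every real β, and every t ∈ (0,1), the function t ↦ X_i(t)^β is differentiable at t with derivative (d/dt) X_i(t)^β = (β/t) X₁(t) X₂(t) ⋯ X_{i−1}(t) X_i(t)^{β+1}, where the empty product (case i = 1) is interpreted as 1. -/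
open MeasureTheory Real

/-- `X1 t = (1 - log t)⁻¹`, the first iterated logarithm. -/
noncomputable def X1 (t : ℝ) : ℝ := (1 - Real.log t)⁻¹

/-- `Xi i` is the paper's `X_i` for `i ≥ 1` (`Xi 0` is the identity placeholder);
`X_i = X_1 ∘ X_{i-1}`. -/
noncomputable def Xi : ℕ → ℝ → ℝ
  | 0, t => t
  | n+1, t => X1 (Xi n t)

/-! Since `(1 - log t)' = -1/t`, the first iterate satisfies `X₁' = X₁² / t`. Feeding this into the
chain rule for `X_{n+1} = X₁ ∘ X_n` gives by induction `X_{n+1}' = X₁ ⋯ X_n X_{n+1}² / t`,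
and the power rule turns `X_i²` into `β X_i^{β+1}`. -/

open Set

lemma X1_mem_Ioc {t : ℝ} (ht : t ∈ Ioc 0 1) : X1 t ∈ Ioc 0 1 := by
  have hlog : Real.log t ≤ 0 := Real.log_nonpos ht.1.le ht.2
  exact ⟨inv_pos.mpr (by linarith), inv_le_one_of_one_le₀ (by linarith)⟩

lemma Xi_mem_Ioc (i : ℕ) {t : ℝ} (ht : t ∈ Ioc 0 1) : Xi i t ∈ Ioc 0 1 := by
  induction i with
  | zero => exact ht
  | succ n ih => exact X1_mem_Ioc ih

lemma hasDerivAt_X1 {t : ℝ} (ht : 0 < t) (hlog : Real.log t ≠ 1) :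
    HasDerivAt X1 (X1 t ^ 2 / t) t := by
  have hne : 1 - Real.log t ≠ 0 := sub_ne_zero.mpr hlog.symm
  refine (((Real.hasDerivAt_log ht.ne').const_sub 1).inv hne).congr_deriv ?_
  rw [X1]
  field_simp

lemma hasDerivAt_Xi_succ (n : ℕ) {t : ℝ} (ht : t ∈ Ioc 0 1) :
    HasDerivAt (Xi (n + 1)) ((∏ j ∈ Finset.range n, Xi (j + 1) t) * Xi (n + 1) t ^ 2 / t) t := by
  induction n with
  | zero =>
    refine (hasDerivAt_X1 ht.1 (by linarith [Real.log_nonpos ht.1.le ht.2])).congr_deriv ?_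
    simp [Xi]
  | succ n ih =>
    obtain ⟨hx, hx1⟩ := Xi_mem_Ioc (n + 1) ht
    have hlog : Real.log (Xi (n + 1) t) ≠ 1 := by linarith [Real.log_nonpos hx.le hx1]
    refine ((hasDerivAt_X1 hx hlog).comp t ih).congr_deriv ?_
    rw [Finset.prod_range_succ]
    simp only [Xi]
    field_simp

/-- The differentiation rule (7) of the paper:
`(d/dt) X_i(t)^β = (β/t) X₁(t)⋯X_{i−1}(t) X_i(t)^{β+1}` for `t ∈ (0,1)`. -/
theorem hasDerivAt_Xi_rpow
    (i : ℕ) (hi : 1 ≤ i) (β : ℝ) (t : ℝ) (ht : t ∈ Set.Ioo (0:ℝ) 1) :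
    HasDerivAt (fun s => Xi i s ^ β)
      (β / t * (∏ j ∈ Finset.range (i-1), Xi (j+1) t) * Xi i t ^ (β + 1)) t := by
  obtain ⟨n, rfl⟩ := Nat.exists_eq_add_of_le' hi
  have hx : 0 < Xi (n + 1) t := (Xi_mem_Ioc (n + 1) (Ioo_subset_Ioc_self ht)).1
  refine ((hasDerivAt_Xi_succ n (Ioo_subset_Ioc_self ht)).rpow_const (p := β)
    (Or.inl hx.ne')).congr_deriv ?_
  have hpow : Xi (n + 1) t ^ (β + 1) = Xi (n + 1) t ^ 2 * Xi (n + 1) t ^ (β - 1) := by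
    rw [← Real.rpow_natCast, ← Real.rpow_add hx]
    ring_nf
  rw [Nat.add_sub_cancel, hpow]
  ring
end
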